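/- arXiv:1503.01733 — 3 statements merged into one kernel-verified Lean document; each statement's English description precedes it below -/
import Mathlib

section
/- Let ι be a nonempty finite index set, let w : ι → ℝ be nonnegative weights with ∑_{i∈ι} w_i = 1, let 0 < a ≤ b, and let x : ι → ℝ satisfy x_i ∈ [a, b] for every i. Write A = ∑_i w_i x_i for the weighted arithmetic mean and G = ∏_i x_i^{w_i} for the weighted geometric mean. Then (1/(2b)) ∑_i w_i (x_i − A)² ≤ A − G ≤ (1/(2a)) ∑_i w_i (x_i − A)². -/
/-!
With `ψ u = u - 1 - log u`, the identity `∑ i, w i * log (x i) = log G` gives, for every `c > 0`,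
`∑ i, w i * c * ψ (x i / c) = A - c + c * log (c / G)`. Taking `c = G` writes `A - G` exactly as a
weighted sum of `G * ψ (x i / G)`; taking `c = A` does the same for `A * log (A / G) ≥ A - G`.
Both bounds then follow termwise from
`(u - 1)² / (2 max u 1) ≤ ψ u ≤ (u - 1)² / (2 min u 1)`, together with the fact that
`∑ i, w i * (x i - c) ^ 2` is minimal at `c = A`.
-/

open Finset

namespace Real

theorem monotoneOn_log_sub_add_sq :
    MonotoneOn (fun u => log u - (u - 1) + (u - 1) ^ 2 / 2) (Set.Ioi 0) := by
  have hderiv : ∀ u : ℝ, 0 < u →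
      HasDerivAt (fun u => log u - (u - 1) + (u - 1) ^ 2 / 2) (u⁻¹ - 1 + (u - 1)) u := by
    intro u hu
    have := ((hasDerivAt_log hu.ne').fun_sub ((hasDerivAt_id' u).sub_const 1)).fun_add
      ((((hasDerivAt_id' u).sub_const 1).fun_pow 2).div_const 2)
    exact this.congr_deriv (by push_cast; ring)
  refine monotoneOn_of_hasDerivWithinAt_nonneg (convex_Ioi 0)
    (fun u hu => (hderiv u hu).continuousAt.continuousWithinAt)
    (fun u hu => (hderiv u (interior_subset hu)).hasDerivWithinAt) fun u hu => ?_
  rw [interior_Ioi, Set.mem_Ioi] at hu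
  have : u⁻¹ - 1 + (u - 1) = (u - 1) ^ 2 / u := by field_simp; ring
  rw [this]
  positivity

theorem sub_one_sub_sq_div_two_le_log {u : ℝ} (hu : 1 ≤ u) : u - 1 - (u - 1) ^ 2 / 2 ≤ log u := by
  have := monotoneOn_log_sub_add_sq (Set.mem_Ioi.2 one_pos)
    (Set.mem_Ioi.2 (one_pos.trans_le hu)) hu
  simp only [log_one] at this
  linarith

theorem log_le_sub_one_sub_sq_div_two {u : ℝ} (hu₀ : 0 < u) (hu : u ≤ 1) :
    log u ≤ u - 1 - (u - 1) ^ 2 / 2 := by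
  have := monotoneOn_log_sub_add_sq hu₀ (Set.mem_Ioi.2 one_pos) hu
  simp only [log_one] at this
  linarith

theorem log_le_sub_inv_div_two {u : ℝ} (hu : 1 ≤ u) : log u ≤ (u - u⁻¹) / 2 :=
  (self_le_sinh_iff.2 (log_nonneg hu)).trans_eq (sinh_log (by linarith))

theorem sub_inv_div_two_le_log {u : ℝ} (hu₀ : 0 < u) (hu : u ≤ 1) : (u - u⁻¹) / 2 ≤ log u :=
  (sinh_log hu₀).symm.trans_le (sinh_le_self_iff.2 (log_nonpos hu₀.le hu))

variable {t c : ℝ}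

theorem mul_div_sub_one_sub_sq_div_two (hc : c ≠ 0) :
    c * (t / c - 1 - (t / c - 1) ^ 2 / 2) = t - c - (t - c) ^ 2 / (2 * c) := by
  field_simp

theorem mul_div_sub_inv_div_two (ht : t ≠ 0) (hc : c ≠ 0) :
    c * ((t / c - (t / c)⁻¹) / 2) = t - c - (t - c) ^ 2 / (2 * t) := by
  field_simp; ring

theorem sq_sub_div_two_mul_max_le (ht : 0 < t) (hc : 0 < c) :
    (t - c) ^ 2 / (2 * max t c) ≤ t - c - c * log (t / c) := by
  rcases le_total t c with htc | hct
  · have := mul_le_mul_of_nonneg_left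
      (log_le_sub_one_sub_sq_div_two (div_pos ht hc) ((div_le_one hc).2 htc)) hc.le
    rw [mul_div_sub_one_sub_sq_div_two hc.ne'] at this
    rw [max_eq_right htc]
    linarith
  · have := mul_le_mul_of_nonneg_left (log_le_sub_inv_div_two ((one_le_div hc).2 hct)) hc.le
    rw [mul_div_sub_inv_div_two ht.ne' hc.ne'] at this
    rw [max_eq_left hct]
    linarith

theorem sub_sub_mul_log_le_sq_sub_div_two_mul_min (ht : 0 < t) (hc : 0 < c) :
    t - c - c * log (t / c) ≤ (t - c) ^ 2 / (2 * min t c) := by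
  rcases le_total t c with htc | hct
  · have := mul_le_mul_of_nonneg_left
      (sub_inv_div_two_le_log (div_pos ht hc) ((div_le_one hc).2 htc)) hc.le
    rw [mul_div_sub_inv_div_two ht.ne' hc.ne'] at this
    rw [min_eq_left htc]
    linarith
  · have := mul_le_mul_of_nonneg_left (sub_one_sub_sq_div_two_le_log ((one_le_div hc).2 hct)) hc.le
    rw [mul_div_sub_one_sub_sq_div_two hc.ne'] at this
    rw [min_eq_right hct]
    linarith

end Real

section WeightedMeans

variable {ι : Type*} {s : Finset ι} {w x : ι → ℝ}

theorem sum_mul_sub_sq_eq (hsum : ∑ i ∈ s, w i = 1) (c : ℝ) :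
    ∑ i ∈ s, w i * (x i - c) ^ 2 =
      ∑ i ∈ s, w i * (x i - ∑ j ∈ s, w j * x j) ^ 2 + (∑ j ∈ s, w j * x j - c) ^ 2 := by
  set A := ∑ j ∈ s, w j * x j
  have expand : ∀ i, w i * (x i - c) ^ 2 =
      w i * (x i - A) ^ 2 + 2 * (A - c) * (w i * x i) + ((A - c) ^ 2 - 2 * (A - c) * A) * w i :=
    fun i => by ring
  simp only [expand, sum_add_distrib, ← mul_sum, hsum]
  ring

theorem sum_mul_sub_sub_mul_log_div (hsum : ∑ i ∈ s, w i = 1) (hx : ∀ i ∈ s, 0 < x i)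
    {c : ℝ} (hc : 0 < c) :
    ∑ i ∈ s, w i * (x i - c - c * Real.log (x i / c)) =
      ∑ i ∈ s, w i * x i - c + c * Real.log (c / ∏ i ∈ s, x i ^ w i) := by
  have hG : 0 < ∏ i ∈ s, x i ^ w i := prod_pos fun i hi => Real.rpow_pos_of_pos (hx i hi) _
  have hlogG : Real.log (∏ i ∈ s, x i ^ w i) = ∑ i ∈ s, w i * Real.log (x i) := by
    rw [Real.log_prod fun i hi => (Real.rpow_pos_of_pos (hx i hi) _).ne']
    exact sum_congr rfl fun i hi => Real.log_rpow (hx i hi) _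
  have expand : ∀ i ∈ s, w i * (x i - c - c * Real.log (x i / c)) =
      w i * x i - (c - c * Real.log c) * w i - c * (w i * Real.log (x i)) := fun i hi => by
    rw [Real.log_div (hx i hi).ne' hc.ne']; ring
  rw [sum_congr rfl expand, sum_sub_distrib, sum_sub_distrib, ← mul_sum, ← mul_sum, hsum,
    Real.log_div hc.ne' hG.ne', hlogG]
  ring

theorem variance_div_le_arith_mean_sub_geom_mean_weighted (hw : ∀ i ∈ s, 0 ≤ w i)
    (hsum : ∑ i ∈ s, w i = 1) (hx : ∀ i ∈ s, 0 < x i) {b : ℝ} (hxb : ∀ i ∈ s, x i ≤ b) :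
    (1 / (2 * b)) * ∑ i ∈ s, w i * (x i - ∑ j ∈ s, w j * x j) ^ 2 ≤
      ∑ i ∈ s, w i * x i - ∏ i ∈ s, x i ^ w i := by
  set A := ∑ j ∈ s, w j * x j
  set G := ∏ i ∈ s, x i ^ w i
  have hG : 0 < G := prod_pos fun i hi => Real.rpow_pos_of_pos (hx i hi) _
  have hGA : G ≤ A := Real.geom_mean_le_arith_mean_weighted s w x hw hsum fun i hi => (hx i hi).le
  have hAb : A ≤ b := by
    calc A ≤ ∑ i ∈ s, w i * b :=
          sum_le_sum fun i hi => mul_le_mul_of_nonneg_left (hxb i hi) (hw i hi)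
      _ = b := by rw [← sum_mul, hsum, one_mul]
  have hb : 0 < b := hG.trans_le (hGA.trans hAb)
  calc (1 / (2 * b)) * ∑ i ∈ s, w i * (x i - A) ^ 2
      ≤ (1 / (2 * b)) * ∑ i ∈ s, w i * (x i - G) ^ 2 := by
        refine mul_le_mul_of_nonneg_left ?_ (by positivity)
        rw [sum_mul_sub_sq_eq hsum G]
        exact le_add_of_nonneg_right (sq_nonneg _)
    _ = ∑ i ∈ s, w i * ((x i - G) ^ 2 / (2 * b)) := by
        rw [mul_sum]; exact sum_congr rfl fun i _ => by ring
    _ ≤ ∑ i ∈ s, w i * (x i - G - G * Real.log (x i / G)) := by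
        refine sum_le_sum fun i hi => mul_le_mul_of_nonneg_left ?_ (hw i hi)
        refine le_trans ?_ (Real.sq_sub_div_two_mul_max_le (hx i hi) hG)
        gcongr
        exact max_le (hxb i hi) (hGA.trans hAb)
    _ = A - G := by
        rw [sum_mul_sub_sub_mul_log_div hsum hx hG, div_self hG.ne', Real.log_one]; ring

theorem arith_mean_sub_geom_mean_le_variance_div_weighted (hw : ∀ i ∈ s, 0 ≤ w i)
    (hsum : ∑ i ∈ s, w i = 1) {a : ℝ} (ha : 0 < a) (hxa : ∀ i ∈ s, a ≤ x i) :
    ∑ i ∈ s, w i * x i - ∏ i ∈ s, x i ^ w i ≤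
      (1 / (2 * a)) * ∑ i ∈ s, w i * (x i - ∑ j ∈ s, w j * x j) ^ 2 := by
  set A := ∑ j ∈ s, w j * x j
  set G := ∏ i ∈ s, x i ^ w i
  have hx : ∀ i ∈ s, 0 < x i := fun i hi => ha.trans_le (hxa i hi)
  have hG : 0 < G := prod_pos fun i hi => Real.rpow_pos_of_pos (hx i hi) _
  have haA : a ≤ A := by
    calc a = ∑ i ∈ s, w i * a := by rw [← sum_mul, hsum, one_mul]
      _ ≤ A := sum_le_sum fun i hi => mul_le_mul_of_nonneg_left (hxa i hi) (hw i hi)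
  have hA : 0 < A := ha.trans_le haA
  calc A - G = A * (1 - (A / G)⁻¹) := by field_simp
    _ ≤ A * Real.log (A / G) :=
        mul_le_mul_of_nonneg_left (Real.one_sub_inv_le_log_of_pos (div_pos hA hG)) hA.le
    _ = ∑ i ∈ s, w i * (x i - A - A * Real.log (x i / A)) := by
        rw [sum_mul_sub_sub_mul_log_div hsum hx hA]; ring
    _ ≤ ∑ i ∈ s, w i * ((x i - A) ^ 2 / (2 * a)) := by
        refine sum_le_sum fun i hi => mul_le_mul_of_nonneg_left ?_ (hw i hi)
        refine (Real.sub_sub_mul_log_le_sq_sub_div_two_mul_min (hx i hi) hA).trans ?_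
        gcongr
        exact le_min (hxa i hi) haA
    _ = (1 / (2 * a)) * ∑ i ∈ s, w i * (x i - A) ^ 2 := by
        rw [mul_sum]; exact sum_congr rfl fun i _ => by ring

end WeightedMeans

theorem cartwright_field_general {ι : Type*} [Fintype ι]
    (w x : ι → ℝ) (hw : ∀ i, 0 ≤ w i) (hsum : ∑ i, w i = 1)
    (a b : ℝ) (ha : 0 < a)
    (hx : ∀ i, x i ∈ Set.Icc a b) :
    (1 / (2 * b)) * ∑ i, w i * (x i - ∑ j, w j * x j) ^ 2 ≤
        (∑ i, w i * x i) - ∏ i, x i ^ w i ∧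
      (∑ i, w i * x i) - ∏ i, x i ^ w i ≤
        (1 / (2 * a)) * ∑ i, w i * (x i - ∑ j, w j * x j) ^ 2 :=
  ⟨variance_div_le_arith_mean_sub_geom_mean_weighted (fun i _ => hw i) hsum
      (fun i _ => ha.trans_le (hx i).1) fun i _ => (hx i).2,
    arith_mean_sub_geom_mean_le_variance_div_weighted (fun i _ => hw i) hsum ha fun i _ => (hx i).1⟩

/-- **Cartwright–Field refinement of the weighted AM–GM inequality.**
For nonnegative weights `w` summing to `1` and points `x i ∈ [a, b]` with `0 < a ≤ b`,
writing `A = ∑ i, w i * x i` and `G = ∏ i, x i ^ w i` (real powers), we have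
`(1/(2b)) ∑ i, w i (x i − A)² ≤ A − G ≤ (1/(2a)) ∑ i, w i (x i − A)²`. -/
theorem cartwright_field {ι : Type*} [Fintype ι] [Nonempty ι]
    (w x : ι → ℝ) (hw : ∀ i, 0 ≤ w i) (hsum : ∑ i, w i = 1)
    (a b : ℝ) (ha : 0 < a) (hab : a ≤ b)
    (hx : ∀ i, x i ∈ Set.Icc a b) :
    (1 / (2 * b)) * ∑ i, w i * (x i - ∑ j, w j * x j) ^ 2 ≤
        (∑ i, w i * x i) - ∏ i, x i ^ w i ∧
      (∑ i, w i * x i) - ∏ i, x i ^ w i ≤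
        (1 / (2 * a)) * ∑ i, w i * (x i - ∑ j, w j * x j) ^ 2 :=
  cartwright_field_general w x hw hsum a b ha hx
end

section
/- Let E = EuclideanSpace ℝ (Fin k), let A be a subset of the unit sphere {z ∈ E : ‖z‖ = 1}, let x ∈ A, and let η ∈ E be a unit vector with ⟨η, x⟩ = 0. Define the local reach θ_ℓ(x,η) = sSup {p ∈ [0, π] : ∀ y ∈ A, ⟨y, (cos p)·x + (sin p)·η⟩ ≤ cos p}. Assume the set R = {max(⟨y, η⟩, 0)/(1 − ⟨x, y⟩) : y ∈ A, y ≠ x} is bounded above, and let S = sSup R (with sSup ∅ = 0). Then cot(min(θ_ℓ(x,η), π/2)) = S; equivalently, min(θ_ℓ(x,η), π/2) = π/2 − arctan S. -/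
open Real
open scoped RealInnerProductSpace

/-- The directional critical radius formula (Appendix 1 / Lemma 4.1): for a subset `A` of
the unit sphere of `EuclideanSpace ℝ (Fin k)`, a point `x ∈ A`, and a unit vector `η`
orthogonal to `x`, let `θℓ` be the supremum of those `p ∈ [0, π]` for which `x` is a
nearest point of `A` to the geodesic point `cos p • x + sin p • η`.  If the set
`R = {⟪y,η⟫⁺ / (1 − ⟪x,y⟫) : y ∈ A, y ≠ x}` is bounded above, then
`cot (min θℓ (π/2)) = sSup R` and `min θℓ (π/2) = π/2 − arctan (sSup R)`. -/
theorem directional_reach_formula {k : ℕ}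
    (A : Set (EuclideanSpace ℝ (Fin k))) (hA : A ⊆ {z | ‖z‖ = 1})
    (x : EuclideanSpace ℝ (Fin k)) (hx : x ∈ A)
    (η : EuclideanSpace ℝ (Fin k)) (hη : ‖η‖ = 1) (hηx : ⟪η, x⟫ = 0)
    (θℓ : ℝ)
    (hθℓ : θℓ = sSup {p : ℝ | p ∈ Set.Icc 0 π ∧
      ∀ y ∈ A, ⟪y, Real.cos p • x + Real.sin p • η⟫ ≤ Real.cos p})
    (R : Set ℝ)
    (hR : R = {s : ℝ | ∃ y ∈ A, y ≠ x ∧ s = max ⟪y, η⟫ 0 / (1 - ⟪x, y⟫)})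
    (hbdd : BddAbove R) :
    Real.cot (min θℓ (π / 2)) = sSup R ∧ min θℓ (π / 2) = π / 2 - Real.arctan (sSup R) := by
  have hx1 : ‖x‖ = 1 := hA hx
  have hden : ∀ y ∈ A, y ≠ x → 0 < 1 - ⟪x, y⟫ := by
    intro y hy hyx
    have h1 : ⟪x, y⟫ ≤ 1 := by
      have := real_inner_le_norm x y
      rw [hx1, hA hy] at this; linarith
    have h2 : ⟪x, y⟫ ≠ 1 := fun h =>
      hyx ((inner_eq_one_iff_of_norm_eq_one hx1 (hA hy)).mp h).symm
    cases lt_or_eq_of_le h1 with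
    | inl h => linarith
    | inr h => exact absurd h h2
  set S := sSup R with hSdef
  have hS0 : 0 ≤ S := by
    rcases R.eq_empty_or_nonempty with h | ⟨r, hr⟩
    · simp [hSdef, h, Real.sSup_empty]
    · have hr0 : 0 ≤ r := by
        rw [hR] at hr
        obtain ⟨y, hy, hyx, rfl⟩ := hr
        exact div_nonneg (le_max_right _ _) (le_of_lt (hden y hy hyx))
      exact hr0.trans (le_csSup hbdd hr)
  set t := π / 2 - Real.arctan S with htdef
  have harc_lt : Real.arctan S < π / 2 := Real.arctan_lt_pi_div_two S
  have harc_nn : 0 ≤ Real.arctan S := by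
    rw [← Real.arctan_zero]
    exact Real.arctan_strictMono.monotone hS0
  have ht_pos : 0 < t := by rw [htdef]; linarith
  have ht_le : t ≤ π / 2 := by rw [htdef]; linarith
  have ht_lt_pi : t < π := lt_of_le_of_lt ht_le (by linarith [Real.pi_pos])
  have hsin_t : 0 < Real.sin t := Real.sin_pos_of_pos_of_lt_pi ht_pos ht_lt_pi
  have hcos_t : Real.cos t = S * Real.sin t := by
    rw [htdef, Real.cos_pi_div_two_sub, Real.sin_pi_div_two_sub,
        Real.sin_arctan, Real.cos_arctan]
    ring
  have hxη : ⟪x, η⟫ = 0 := by rw [real_inner_comm]; exact hηx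
  set P := {p : ℝ | p ∈ Set.Icc 0 π ∧
      ∀ y ∈ A, ⟪y, Real.cos p • x + Real.sin p • η⟫ ≤ Real.cos p} with hPdef
  have hcond : ∀ p : ℝ, ∀ y ∈ A,
      (⟪y, Real.cos p • x + Real.sin p • η⟫ ≤ Real.cos p ↔
        Real.sin p * ⟪y, η⟫ ≤ Real.cos p * (1 - ⟪x, y⟫)) := by
    intro p y _
    rw [inner_add_right, real_inner_smul_right, real_inner_smul_right,
        real_inner_comm y x, mul_sub, mul_one]
    constructor <;> intro h <;> linarith
  have hmemP : ∀ p : ℝ, p ∈ P ↔ (p ∈ Set.Icc 0 π ∧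
      ∀ y ∈ A, y ≠ x → Real.sin p * ⟪y, η⟫ ≤ Real.cos p * (1 - ⟪x, y⟫)) := by
    intro p
    constructor
    · rintro ⟨h1, h2⟩
      exact ⟨h1, fun y hy _ => (hcond p y hy).mp (h2 y hy)⟩
    · rintro ⟨h1, h2⟩
      refine ⟨h1, fun y hy => (hcond p y hy).mpr ?_⟩
      by_cases hyx : y = x
      · have hxx : ⟪x, x⟫ = 1 := by
          rw [real_inner_self_eq_norm_sq, hx1]; norm_num
        rw [hyx, hxη, hxx]
        norm_num
      · exact h2 y hy hyx
  have htP : t ∈ P := by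
    rw [hmemP]
    refine ⟨⟨le_of_lt ht_pos, le_of_lt ht_lt_pi⟩, fun y hy hyx => ?_⟩
    have hd := hden y hy hyx
    have hrR : max ⟪y, η⟫ 0 / (1 - ⟪x, y⟫) ∈ R := by
      rw [hR]; exact ⟨y, hy, hyx, rfl⟩
    have hle : max ⟪y, η⟫ 0 / (1 - ⟪x, y⟫) ≤ S := le_csSup hbdd hrR
    have h1 : ⟪y, η⟫ ≤ S * (1 - ⟪x, y⟫) :=
      (le_max_left _ _).trans ((div_le_iff₀ hd).mp hle)
    calc Real.sin t * ⟪y, η⟫ ≤ Real.sin t * (S * (1 - ⟪x, y⟫)) :=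
          mul_le_mul_of_nonneg_left h1 (le_of_lt hsin_t)
      _ = Real.cos t * (1 - ⟪x, y⟫) := by rw [hcos_t]; ring
  have hPbdd : BddAbove P := BddAbove.mono (fun p hp => hp.1) bddAbove_Icc
  have hθ_ge : t ≤ θℓ := by rw [hθℓ]; exact le_csSup hPbdd htP
  have hθ_le : 0 < S → θℓ ≤ t := by
    intro hSpos
    rw [hθℓ]
    apply csSup_le ⟨t, htP⟩
    intro p hp
    rw [hmemP] at hp
    obtain ⟨⟨hp0, hpπ⟩, hcondp⟩ := hp
    by_contra hpt
    push_neg at hpt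
    have hRne : R.Nonempty := by
      by_contra h
      rw [Set.not_nonempty_iff_eq_empty] at h
      have : S = 0 := by rw [hSdef, h, Real.sSup_empty]
      linarith
    rcases le_or_gt p (π / 2) with hple | hpgt
    · -- t < p ≤ π/2
      have hppos : 0 < p := ht_pos.trans hpt
      have hsinp : 0 < Real.sin p :=
        Real.sin_pos_of_pos_of_lt_pi hppos
          (lt_of_le_of_lt hple (by linarith [Real.pi_pos]))
      have hsint_le : Real.sin t < Real.sin p :=
        Real.sin_lt_sin_of_lt_of_le_pi_div_two (by linarith) hple hpt
      have hcosp_lt : Real.cos p < Real.cos t :=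
        Real.cos_lt_cos_of_nonneg_of_le_pi (le_of_lt ht_pos) hpπ hpt
      have hkey : Real.cos p < S * Real.sin p := by
        have : S * Real.sin t < S * Real.sin p :=
          mul_lt_mul_of_pos_left hsint_le hSpos
        calc Real.cos p < Real.cos t := hcosp_lt
          _ = S * Real.sin t := hcos_t
          _ < S * Real.sin p := this
      have hdivlt : Real.cos p / Real.sin p < S := (div_lt_iff₀ hsinp).mpr hkey
      obtain ⟨r, hrR, hrgt⟩ := exists_lt_of_lt_csSup hRne hdivlt
      rw [hR] at hrR
      obtain ⟨y, hy, hyx, rfl⟩ := hrR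
      have hd := hden y hy hyx
      have hcosp_nn : 0 ≤ Real.cos p :=
        Real.cos_nonneg_of_mem_Icc ⟨by linarith, hple⟩
      have hdiv_nn : 0 ≤ Real.cos p / Real.sin p := div_nonneg hcosp_nn hsinp.le
      have hm : 0 < max ⟪y, η⟫ 0 := by
        have h := (div_lt_div_iff₀ hsinp hd).mp hrgt
        nlinarith
      have hyη : max ⟪y, η⟫ 0 = ⟪y, η⟫ := by
        rcases le_or_gt ⟪y, η⟫ 0 with h | h
        · rw [max_eq_right h] at hm; linarith
        · exact max_eq_left h.le
      have h := (div_lt_div_iff₀ hsinp hd).mp hrgt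
      rw [hyη] at h
      have hc := hcondp y hy hyx
      nlinarith
    · -- π/2 < p ≤ π
      have hcosp : Real.cos p < 0 :=
        Real.cos_neg_of_pi_div_two_lt_of_lt hpgt (by linarith [Real.pi_pos])
      have hsinp : 0 ≤ Real.sin p := Real.sin_nonneg_of_nonneg_of_le_pi hp0 hpπ
      obtain ⟨r, hrR, hrgt⟩ := exists_lt_of_lt_csSup hRne hSpos
      rw [hR] at hrR
      obtain ⟨y, hy, hyx, rfl⟩ := hrR
      have hd := hden y hy hyx
      have hm : 0 < max ⟪y, η⟫ 0 := by
        have := mul_pos hrgt hd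
        rwa [div_mul_cancel₀ _ hd.ne'] at this
      have hyη : 0 < ⟪y, η⟫ := by
        rcases le_or_gt ⟪y, η⟫ 0 with h | h
        · rw [max_eq_right h] at hm; linarith
        · exact h
      have hc := hcondp y hy hyx
      have h1 : 0 ≤ Real.sin p * ⟪y, η⟫ := mul_nonneg hsinp hyη.le
      have h2 : Real.cos p * (1 - ⟪x, y⟫) < 0 := mul_neg_of_neg_of_pos hcosp hd
      linarith
  have hmin : min θℓ (π / 2) = t := by
    rcases eq_or_lt_of_le hS0 with hS | hS
    · have ht : t = π / 2 := by rw [htdef, ← hS, Real.arctan_zero, sub_zero]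
      rw [ht]
      exact min_eq_right (ht ▸ hθ_ge)
    · have : θℓ = t := le_antisymm (hθ_le hS) hθ_ge
      rw [this]
      exact min_eq_left ht_le
  refine ⟨?_, hmin⟩
  rw [hmin, Real.cot_eq_cos_div_sin, hcos_t, mul_div_assoc, div_self hsin_t.ne', mul_one]
end

section
/- Let E = EuclideanSpace ℝ (Fin k), let A be a subset of the unit sphere {z ∈ E : ‖z‖ = 1}, let x ∈ A, and let V be a nonzero linear subspace of E with ⟨v, x⟩ = 0 for all v ∈ V. For each unit vector η ∈ V define the local reach θ_ℓ(x,η) = sSup {p ∈ [0, π] : ∀ y ∈ A, ⟨y, (cos p)·x + (sin p)·η⟩ ≤ cos p}, and set θ(x) = min(⨅_{η ∈ V, ‖η‖=1} θ_ℓ(x,η), π/2). Assume the set {‖P_V y‖²/(1 − ⟨x, y⟩)² : y ∈ A, y ≠ x} is bounded above, where P_V is the orthogonal projection onto V. Then θ(x) > 0 and cot²(θ(x)) = sSup {‖P_V y‖²/(1 − ⟨x, y⟩)² : y ∈ A, y ≠ x} (with sSup ∅ = 0). -/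
/-!
For `p ∈ (0, π)` and `y ∈ A \ {x}`, the nearest-point condition at `γ_{x,η}(p)` reads
`⟪y, η⟫ / (1 - ⟪x, y⟫) ≤ cot p`, and `cot` is decreasing on `(0, π)`. Over unit `η ∈ V` the
numerator is at most `‖P_V y‖`, with equality at `η = P_V y / ‖P_V y‖`. Hence
`arccot √(sSup S) ≤ θ ≤ arccot (‖P_V y‖ / (1 - ⟪x, y⟫))` for every `y ∈ A \ {x}`, and applying
`cot` to both bounds gives `cot² θ = sSup S`.
-/

open Real Set
open scoped RealInnerProductSpace

namespace Real

theorem strictAntiOn_cot : StrictAntiOn cot (Ioo 0 π) := by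
  intro a ha b hb hab
  have hsa := sin_pos_of_pos_of_lt_pi ha.1 ha.2
  have hsb := sin_pos_of_pos_of_lt_pi hb.1 hb.2
  have hsba : 0 < sin (b - a) := sin_pos_of_pos_of_lt_pi (by linarith) (by linarith [hb.2, ha.1])
  rw [sin_sub] at hsba
  rw [cot_eq_cos_div_sin, cot_eq_cos_div_sin, div_lt_div_iff₀ hsb hsa]
  linarith

noncomputable def arccot (m : ℝ) : ℝ := π / 2 - arctan m

theorem arccot_mem_Ioo (m : ℝ) : arccot m ∈ Ioo 0 π := by
  unfold arccot
  exact ⟨by linarith [arctan_lt_pi_div_two m], by linarith [neg_pi_div_two_lt_arctan m, pi_pos]⟩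

theorem arccot_le_pi_div_two {m : ℝ} (hm : 0 ≤ m) : arccot m ≤ π / 2 :=
  sub_le_self _ (arctan_nonneg.2 hm)

theorem cot_arccot (m : ℝ) : cot (arccot m) = m := by
  rw [arccot, cot_eq_cos_div_sin, cos_pi_div_two_sub, sin_pi_div_two_sub, ← tan_eq_sin_div_cos,
    tan_arctan]

theorem cot_le_iff_arccot_le {θ : ℝ} (hθ : θ ∈ Ioo 0 π) (m : ℝ) : cot θ ≤ m ↔ arccot m ≤ θ := by
  rw [← strictAntiOn_cot.le_iff_ge hθ (arccot_mem_Ioo m), cot_arccot]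

theorem le_cot_iff_le_arccot {θ : ℝ} (hθ : θ ∈ Ioo 0 π) (m : ℝ) : m ≤ cot θ ↔ θ ≤ arccot m := by
  rw [← strictAntiOn_cot.le_iff_ge (arccot_mem_Ioo m) hθ, cot_arccot]

theorem cot_sq_eq_sSup_of_arccot_bounds {θ : ℝ} {S : Set ℝ} (hS : ∀ s ∈ S, 0 ≤ s)
    (hθ_half : θ ≤ π / 2) (hθ_ge : arccot √(sSup S) ≤ θ) (hθ_le : ∀ s ∈ S, θ ≤ arccot √s) :
    0 < θ ∧ cot θ ^ 2 = sSup S := by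
  have hθ : θ ∈ Ioo 0 π := ⟨(arccot_mem_Ioo _).1.trans_le hθ_ge, by linarith [pi_pos]⟩
  have hcot_nonneg : 0 ≤ cot θ := (le_cot_iff_le_arccot hθ 0).2 (by simpa [arccot] using hθ_half)
  refine ⟨hθ.1, le_antisymm ?_ (Real.sSup_le (fun s hs => ?_) (sq_nonneg _))⟩
  · calc cot θ ^ 2 ≤ √(sSup S) ^ 2 :=
          pow_le_pow_left₀ hcot_nonneg ((cot_le_iff_arccot_le hθ _).2 hθ_ge) 2
      _ = sSup S := sq_sqrt (Real.sSup_nonneg hS)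
  · calc s = √s ^ 2 := (sq_sqrt (hS s hs)).symm
      _ ≤ cot θ ^ 2 :=
          pow_le_pow_left₀ (sqrt_nonneg _) ((le_cot_iff_le_arccot hθ _).2 (hθ_le s hs)) 2

end Real

section ReachRadii

variable {E : Type*} [NormedAddCommGroup E] [InnerProductSpace ℝ E]

def reachRadii (A : Set E) (x η : E) : Set ℝ :=
  {p | p ∈ Icc 0 π ∧ ∀ y ∈ A, ⟪y, cos p • x + sin p • η⟫ ≤ cos p}

theorem inner_geodesic_le_cos_iff (x y η : E) (p : ℝ) :
    ⟪y, cos p • x + sin p • η⟫ ≤ cos p ↔ sin p * ⟪y, η⟫ ≤ cos p * (1 - ⟪x, y⟫) := by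
  rw [inner_add_right, real_inner_smul_right, real_inner_smul_right, real_inner_comm x y]
  constructor <;> intro h <;> linarith

theorem inner_geodesic_le_cos_iff_div_le_cot {x y : E} (η : E) {p : ℝ} (hp : p ∈ Ioo 0 π)
    (hxy : ⟪x, y⟫ < 1) :
    ⟪y, cos p • x + sin p • η⟫ ≤ cos p ↔ ⟪y, η⟫ / (1 - ⟪x, y⟫) ≤ cot p := by
  rw [inner_geodesic_le_cos_iff, cot_eq_cos_div_sin,
    div_le_div_iff₀ (sub_pos.2 hxy) (sin_pos_of_pos_of_lt_pi hp.1 hp.2), mul_comm (sin p)]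

theorem mem_reachRadii_of_div_le_cot {A : Set E} {x η : E} {p : ℝ} (hx : ‖x‖ = 1) (hxη : ⟪x, η⟫ = 0)
    (hA : ∀ y ∈ A, y ≠ x → ⟪x, y⟫ < 1) (hp : p ∈ Ioo 0 π)
    (h : ∀ y ∈ A, y ≠ x → ⟪y, η⟫ / (1 - ⟪x, y⟫) ≤ cot p) : p ∈ reachRadii A x η := by
  refine ⟨Ioo_subset_Icc_self hp, fun y hy => ?_⟩
  by_cases hyx : y = x
  · subst hyx
    rw [inner_geodesic_le_cos_iff, hxη, real_inner_self_eq_norm_sq, hx]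
    simp
  · exact (inner_geodesic_le_cos_iff_div_le_cot η hp (hA y hy hyx)).2 (h y hy hyx)

theorem sSup_reachRadii_le_arccot {A : Set E} {x y : E} (η : E) (hy : y ∈ A)
    (hxy : ⟪x, y⟫ < 1) : sSup (reachRadii A x η) ≤ arccot (⟪y, η⟫ / (1 - ⟪x, y⟫)) := by
  have harccot := arccot_mem_Ioo (⟪y, η⟫ / (1 - ⟪x, y⟫))
  refine Real.sSup_le ?_ harccot.1.le
  rintro p ⟨⟨hp0, hpπ⟩, hp⟩
  rcases hp0.eq_or_lt with rfl | hp0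
  · exact harccot.1.le
  have hpπ : p < π := by
    refine hpπ.lt_of_ne ?_
    rintro rfl
    have := hp y hy
    rw [inner_geodesic_le_cos_iff, sin_pi, cos_pi] at this
    linarith
  exact (le_cot_iff_le_arccot ⟨hp0, hpπ⟩ _).1
    ((inner_geodesic_le_cos_iff_div_le_cot η ⟨hp0, hpπ⟩ hxy).1 (hp y hy))

theorem arccot_le_sSup_reachRadii {A : Set E} {x η : E} {m : ℝ} (hx : ‖x‖ = 1)
    (hxη : ⟪x, η⟫ = 0) (hA : ∀ y ∈ A, y ≠ x → ⟪x, y⟫ < 1)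
    (h : ∀ y ∈ A, y ≠ x → ⟪y, η⟫ / (1 - ⟪x, y⟫) ≤ m) : arccot m ≤ sSup (reachRadii A x η) :=
  le_csSup ⟨π, fun _ hp => hp.1.2⟩ <|
    mem_reachRadii_of_div_le_cot hx hxη hA (arccot_mem_Ioo m) (by simpa only [cot_arccot] using h)

variable {V : Submodule ℝ E} [V.HasOrthogonalProjection]

theorem real_inner_starProjection_left_of_mem (y : E) {η : E} (hη : η ∈ V) :
    ⟪V.starProjection y, η⟫ = ⟪y, η⟫ := by
  have := V.starProjection_inner_eq_zero y η hη
  rw [inner_sub_left] at this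
  linarith

theorem real_inner_le_norm_starProjection (y : E) {η : E} (hη : η ∈ V) (hη1 : ‖η‖ = 1) :
    ⟪y, η⟫ ≤ ‖V.starProjection y‖ := by
  simpa [hη1, real_inner_starProjection_left_of_mem y hη] using
    real_inner_le_norm (V.starProjection y) η

theorem real_inner_normalize_starProjection (y : E) :
    ⟪y, ‖V.starProjection y‖⁻¹ • V.starProjection y⟫ = ‖V.starProjection y‖ := by
  rw [real_inner_smul_right,
    ← real_inner_starProjection_left_of_mem y (V.starProjection_apply_mem y),
    real_inner_self_eq_norm_sq]
  rcases eq_or_ne ‖V.starProjection y‖ 0 with h | h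
  · simp [h]
  · field_simp

end ReachRadii

/-- The critical radius formula (Lemma 4.1 / Appendix 1): for a subset `A` of the unit
sphere of `EuclideanSpace ℝ (Fin k)`, a point `x ∈ A`, and a nonzero subspace `V`
orthogonal to `x`, let `θℓ η` be the local reach at `x` in a unit direction `η ∈ V`, and
`θ = min (⨅ unit η ∈ V, θℓ η) (π/2)`.  If the set
`S = {‖P_V y‖² / (1 − ⟪x,y⟫)² : y ∈ A, y ≠ x}` is bounded above, then `θ > 0` and
`cot² θ = sSup S`, where `P_V` is the orthogonal projection onto `V`. -/
theorem reach_formula {k : ℕ}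
    (A : Set (EuclideanSpace ℝ (Fin k))) (hA : A ⊆ {z | ‖z‖ = 1})
    (x : EuclideanSpace ℝ (Fin k)) (hx : x ∈ A)
    (V : Submodule ℝ (EuclideanSpace ℝ (Fin k))) (hV : V ≠ ⊥)
    (hVx : ∀ v ∈ V, ⟪v, x⟫ = 0)
    (θℓ : EuclideanSpace ℝ (Fin k) → ℝ)
    (hθℓ : ∀ η, θℓ η = sSup {p : ℝ | p ∈ Set.Icc 0 π ∧
      ∀ y ∈ A, ⟪y, Real.cos p • x + Real.sin p • η⟫ ≤ Real.cos p})
    (θ : ℝ)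
    (hθ : θ = min (⨅ η : {η : EuclideanSpace ℝ (Fin k) // η ∈ V ∧ ‖η‖ = 1}, θℓ η) (π / 2))
    (S : Set ℝ)
    (hS : S = {s : ℝ | ∃ y ∈ A, y ≠ x ∧
      s = ‖(Submodule.orthogonalProjection V y : EuclideanSpace ℝ (Fin k))‖ ^ 2 / (1 - ⟪x, y⟫) ^ 2})
    (hbdd : BddAbove S) :
    0 < θ ∧ Real.cot θ ^ 2 = sSup S := by
  obtain rfl : θℓ = fun η => sSup (reachRadii A x η) := funext hθℓ
  subst hS
  have hinner : ∀ y ∈ A, y ≠ x → ⟪x, y⟫ < 1 := fun y hy hyx =>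
    (inner_lt_one_iff_real_of_norm_eq_one (hA hx) (hA hy)).2 (Ne.symm hyx)
  have hratio : ∀ y ∈ A, y ≠ x → ‖V.starProjection y‖ / (1 - ⟪x, y⟫) ≤ √(sSup _) :=
    fun y hy hyx => le_sqrt_of_sq_le (le_csSup hbdd ⟨y, hy, hyx, div_pow _ _ _⟩)
  have hθ_le : ∀ η : {η // η ∈ V ∧ ‖η‖ = 1}, θ ≤ sSup (reachRadii A x η) := fun η =>
    hθ ▸ (min_le_left _ _).trans
      (ciInf_le ⟨0, by rintro _ ⟨η, rfl⟩; exact Real.sSup_nonneg fun p hp => hp.1.1⟩ η)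
  obtain ⟨v, hv, hv0⟩ := (Submodule.ne_bot_iff V).1 hV
  have : Nonempty {η // η ∈ V ∧ ‖η‖ = 1} :=
    ⟨⟨‖v‖⁻¹ • v, V.smul_mem _ hv, norm_smul_inv_norm hv0⟩⟩
  refine cot_sq_eq_sSup_of_arccot_bounds ?_ (hθ ▸ min_le_right _ _) ?_ ?_
  · rintro _ ⟨y, -, -, rfl⟩
    positivity
  · refine hθ ▸ le_min (le_ciInf fun ⟨η, hη, hη1⟩ => ?_) (arccot_le_pi_div_two (sqrt_nonneg _))
    refine arccot_le_sSup_reachRadii (hA hx) (real_inner_comm x η ▸ hVx η hη) hinner fun y hy hyx => ?_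
    exact (div_le_div_of_nonneg_right (real_inner_le_norm_starProjection y hη hη1)
      (sub_pos.2 (hinner y hy hyx)).le).trans (hratio y hy hyx)
  · rintro _ ⟨y, hy, hyx, rfl⟩
    rw [← div_pow, sqrt_sq (div_nonneg (norm_nonneg _) (sub_pos.2 (hinner y hy hyx)).le)]
    rcases eq_or_ne (V.starProjection y) 0 with h | h
    · simp [h, hθ, arccot]
    have hbound := sSup_reachRadii_le_arccot (‖V.starProjection y‖⁻¹ • V.starProjection y) hy
      (hinner y hy hyx)
    rw [real_inner_normalize_starProjection] at hbound
    exact (hθ_le ⟨_, V.smul_mem _ (V.starProjection_apply_mem y), norm_smul_inv_norm h⟩).trans hbound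
end
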